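/- arXiv:1602.08042 — 2 statements merged into one kernel-verified Lean document; each statement's English description precedes it below -/
import Mathlib

section
/- Let H be a real Hilbert space, a : H × H → ℝ bilinear, continuous with constant C and coercive with constant α, and b a bounded linear functional. Let V ⊆ H be a closed subspace, u ∈ H the solution of a(v,u)=b(v) for all v ∈ H, and u_h ∈ V the Galerkin solution satisfying a(v,u_h)=b(v) for all v ∈ V. Then ‖u - u_h‖ ≤ (C/α) inf_{w ∈ V} ‖u - w‖ (Céa's lemma). -/
/-- Céa's lemma: quasi-optimality of the Galerkin solution. -/
theorem stmt_2 {H : Type*} [NormedAddCommGroup H] [InnerProductSpace ℝ H] [CompleteSpace H]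
    (a : H →ₗ[ℝ] H →ₗ[ℝ] ℝ) (C α : ℝ) (hC : 0 < C) (hα : 0 < α)
    (hcont : ∀ u v : H, |a u v| ≤ C * ‖u‖ * ‖v‖)
    (hcoer : ∀ u : H, α * ‖u‖ ^ 2 ≤ a u u)
    (b : H →L[ℝ] ℝ) (V : Submodule ℝ H) (hV : IsClosed (V : Set H))
    (u : H) (hu : ∀ v : H, a v u = b v)
    (uh : H) (huhV : uh ∈ V) (huh : ∀ v ∈ V, a v uh = b v) :
    ‖u - uh‖ ≤ (C / α) * ⨅ w : V, ‖u - (w : H)‖ := by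
  set e := u - uh with he
  -- Galerkin orthogonality
  have horth : ∀ v ∈ V, a v e = 0 := by
    intro v hv
    simp [he, map_sub, hu v, huh v hv]
  -- key estimate: for each w ∈ V, ‖e‖ ≤ (C/α) * ‖u - w‖
  have key : ∀ w : V, (α / C) * ‖e‖ ≤ ‖u - (w : H)‖ := by
    intro w
    have hwV : (w : H) - uh ∈ V := sub_mem w.2 huhV
    have h1 : a e e = a (u - (w : H)) e := by
      have : a ((w : H) - uh) e = 0 := horth _ hwV
      have hdecomp : e = (u - (w : H)) + ((w : H) - uh) := by rw [he]; abel
      calc a e e = a ((u - (w : H)) + ((w : H) - uh)) e := by rw [← hdecomp]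
        _ = a (u - (w : H)) e + a ((w : H) - uh) e := by rw [map_add]; simp
        _ = a (u - (w : H)) e := by rw [this, add_zero]
    have h2 : α * ‖e‖ ^ 2 ≤ C * ‖u - (w : H)‖ * ‖e‖ := by
      calc α * ‖e‖ ^ 2 ≤ a e e := hcoer e
        _ = a (u - (w : H)) e := h1
        _ ≤ |a (u - (w : H)) e| := le_abs_self _
        _ ≤ C * ‖u - (w : H)‖ * ‖e‖ := hcont _ _
    rcases eq_or_ne e 0 with h0 | h0
    · simp [h0]
    · have hne : 0 < ‖e‖ := norm_pos_iff.mpr h0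
      have h3 : α * ‖e‖ ≤ C * ‖u - (w : H)‖ := by
        have := mul_le_mul_of_nonneg_right h2 (le_of_lt (inv_pos.mpr hne))
        rw [pow_two] at this
        field_simp at this ⊢
        nlinarith
      rw [div_mul_eq_mul_div, div_le_iff₀ hC]
      nlinarith
  have hinf : (α / C) * ‖e‖ ≤ ⨅ w : V, ‖u - (w : H)‖ :=
    le_ciInf key
  have hCα : 0 < C / α := div_pos hC hα
  calc ‖e‖ = (C / α) * ((α / C) * ‖e‖) := by field_simp
    _ ≤ (C / α) * ⨅ w : V, ‖u - (w : H)‖ :=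
        mul_le_mul_of_nonneg_left hinf hCα.le
end

section
/- Let H be a Hilbert space, a a continuous coercive bilinear form, b a bounded linear functional, and (V_n) an increasing sequence of closed subspaces of H whose union is dense in H. Let u_n ∈ V_n be the Galerkin solutions and u ∈ H the exact weak solution. Then u_n → u in H as n → ∞. -/
/-- Convergence of Galerkin approximations over an increasing dense family of subspaces. -/
theorem stmt_4 {H : Type*} [NormedAddCommGroup H] [InnerProductSpace ℝ H] [CompleteSpace H]
    (a : H →ₗ[ℝ] H →ₗ[ℝ] ℝ) (C α : ℝ) (hC : 0 < C) (hα : 0 < α)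
    (hcont : ∀ u v : H, |a u v| ≤ C * ‖u‖ * ‖v‖)
    (hcoer : ∀ u : H, α * ‖u‖ ^ 2 ≤ a u u)
    (b : H →L[ℝ] ℝ)
    (V : ℕ → Submodule ℝ H) (hVc : ∀ n, IsClosed ((V n : Set H)))
    (hVmono : ∀ n, V n ≤ V (n + 1))
    (hVdense : Dense (⋃ n, (V n : Set H)))
    (un : ℕ → H) (hunV : ∀ n, un n ∈ V n)
    (hun : ∀ n, ∀ v ∈ V n, a v (un n) = b v)
    (u : H) (hu : ∀ v : H, a v u = b v) :
    Filter.Tendsto un Filter.atTop (nhds u) := by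
  have hmono : Monotone V := monotone_nat_of_le_succ hVmono
  -- Céa's lemma
  have cea : ∀ n, ∀ v ∈ V n, ‖u - un n‖ ≤ (C / α) * ‖u - v‖ := by
    intro n v hv
    have horth : a (v - un n) (u - un n) = 0 := by
      have h1 : a (v - un n) (un n) = b (v - un n) :=
        hun n _ (Submodule.sub_mem _ hv (hunV n))
      have h2 : a (v - un n) u = b (v - un n) := hu _
      have h3 := (a (v - un n)).map_sub u (un n)
      rw [h3, h1, h2, sub_self]
    have key : α * ‖u - un n‖ ^ 2 ≤ C * ‖u - v‖ * ‖u - un n‖ := by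
      have h0 := hcoer (u - un n)
      have hsplit : a (u - un n) (u - un n)
          = a (u - v) (u - un n) + a (v - un n) (u - un n) := by
        have h4 : a (u - un n) = a (u - v) + a (v - un n) := by
          rw [← map_add]; congr 1; abel
        rw [h4]; simp
      have hb := hcont (u - v) (u - un n)
      have : a (u - v) (u - un n) ≤ C * ‖u - v‖ * ‖u - un n‖ :=
        le_trans (le_abs_self _) hb
      linarith [h0, hsplit ▸ h0]
    rcases eq_or_lt_of_le (norm_nonneg (u - un n)) with h | h
    · rw [← h]
      positivity
    · rw [div_mul_eq_mul_div, le_div_iff₀ hα]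
      nlinarith
  rw [Metric.tendsto_atTop]
  intro ε hε
  have hδ : 0 < ε * α / C / 2 := by positivity
  obtain ⟨w, hwd, hw⟩ := Metric.dense_iff.mp hVdense u _ hδ
  obtain ⟨s, ⟨N, rfl⟩, hwN⟩ := hw
  refine ⟨N, fun n hn => ?_⟩
  have hwVn : w ∈ V n := hmono hn hwN
  have h1 : ‖u - un n‖ ≤ (C / α) * ‖u - w‖ := cea n w hwVn
  have h2 : ‖u - w‖ < ε * α / C / 2 := by
    rw [Metric.mem_ball, dist_comm] at hwd
    simpa [dist_eq_norm] using hwd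
  rw [dist_eq_norm]
  have : ‖un n - u‖ = ‖u - un n‖ := norm_sub_rev _ _
  rw [this]
  calc ‖u - un n‖ ≤ (C / α) * ‖u - w‖ := h1
    _ < (C / α) * (ε * α / C / 2) := by
        apply mul_lt_mul_of_pos_left h2 (by positivity)
    _ = ε / 2 := by field_simp
    _ < ε := by linarith
end
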